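/- arXiv:2103.16479 — 11 statements merged into one kernel-verified Lean document; each statement's English description precedes it below -/
import Mathlib

section
/- If \mathcal{F} \subset 2^{[n]} is a family of sets such that |A \cap B| is even for all A, B \in \mathcal{F}, then |\mathcal{F}| \leq 2^{\lfloor n/2 \rfloor}. -/
/-!
The indicator vectors of the sets in `F` are orthogonal to each other and to themselves for the dot product
on `𝔽₂ⁿ`, so they span a totally isotropic subspace `W ≤ Wᗮ`. Since the dot product is nondegenerate,
`dim W + dim Wᗮ = n`, hence `dim W ≤ n / 2` and `|F| ≤ |W| ≤ 2 ^ (n / 2)`.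
-/

open Module Finset

namespace LinearMap.BilinForm

variable {K V : Type*} [Field K] [AddCommGroup V] [Module K V] {B : LinearMap.BilinForm K V}

theorem span_le_orthogonal_span {S : Set V} (hS : ∀ x ∈ S, ∀ y ∈ S, B x y = 0) :
    Submodule.span K S ≤ B.orthogonal (Submodule.span K S) :=
  Submodule.span_le.mpr fun y hy _ hx =>
    (Submodule.span_le (p := LinearMap.ker (B.flip y))).mpr (fun x hx => hS x hx y hy) hx

variable [FiniteDimensional K V]

theorem finrank_le_half_of_le_orthogonal (hB : B.Nondegenerate) {W : Submodule K V}
    (hW : W ≤ B.orthogonal W) : finrank K W ≤ finrank K V / 2 := by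
  have hWperp := finrank_orthogonal hB W
  have hmono := Submodule.finrank_mono hW
  have hle := Submodule.finrank_le W
  omega

theorem card_le_pow_finrank_div_two [Finite K] (hB : B.Nondegenerate) (S : Finset V)
    (hS : ∀ x ∈ S, ∀ y ∈ S, B x y = 0) :
    #S ≤ Nat.card K ^ (finrank K V / 2) := by
  have : Finite V := Module.finite_of_finite K
  let W := Submodule.span K (S : Set V)
  calc #S = Nat.card (S : Set V) := (Nat.card_eq_finsetCard S).symm
    _ ≤ Nat.card W := Nat.card_mono (Set.toFinite _) Submodule.subset_span
    _ = Nat.card K ^ finrank K W := Module.natCard_eq_pow_finrank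
    _ ≤ Nat.card K ^ (finrank K V / 2) :=
      Nat.pow_le_pow_right Nat.card_pos
        (finrank_le_half_of_le_orthogonal hB (span_le_orthogonal_span hS))

end LinearMap.BilinForm

theorem dotProductBilin_nondegenerate {ι K : Type*} [Fintype ι] [Field K] :
    (dotProductBilin K K : LinearMap.BilinForm K (ι → K)).Nondegenerate :=
  ⟨fun v hv => dotProduct_eq_zero v hv, fun w hw => dotProduct_eq_zero w fun v => by
    rw [dotProduct_comm]; exact hw v⟩

theorem Finset.indicator_one_dotProduct_indicator_one {ι R : Type*} [Fintype ι] [DecidableEq ι]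
    [NonAssocSemiring R] (s t : Finset ι) :
    (s : Set ι).indicator 1 ⬝ᵥ (t : Set ι).indicator (1 : ι → R) = (#(s ∩ t) : R) := by
  simp [dotProduct, Set.indicator_apply, inter_comm]

/-- Eventown theorem: if all pairwise intersections (including `A = B`) of members of a
family `F` of subsets of `[n]` have even size, then `|F| ≤ 2 ^ ⌊n/2⌋`. -/
theorem eventown (n : ℕ) (F : Finset (Finset (Fin n)))
    (h : ∀ A ∈ F, ∀ B ∈ F, 2 ∣ (A ∩ B).card) :
    F.card ≤ 2 ^ (n / 2) := by
  let v : Finset (Fin n) → Fin n → ZMod 2 := fun A => (A : Set (Fin n)).indicator 1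
  have hv : Function.Injective v := fun A B hAB =>
    coe_injective (Set.indicator_one_inj (ZMod 2) hAB)
  have horth : ∀ x ∈ F.image v, ∀ y ∈ F.image v,
      dotProductBilin (ZMod 2) (ZMod 2) x y = 0 := by
    simp only [mem_image, forall_exists_index, and_imp]
    rintro _ A hA rfl _ B hB rfl
    simpa [v, indicator_one_dotProduct_indicator_one,
      ZMod.natCast_eq_zero_iff] using h A hA B hB
  calc #F = #(F.image v) := (card_image_of_injective F hv).symm
    _ ≤ Nat.card (ZMod 2) ^ (finrank (ZMod 2) (Fin n → ZMod 2) / 2) :=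
      LinearMap.BilinForm.card_le_pow_finrank_div_two dotProductBilin_nondegenerate _ horth
    _ = 2 ^ (n / 2) := by simp
end

section
/- Let \mathbb{F} be a field, b_1,...,b_d \in \mathbb{F}, and let z be the number of indices i with b_i = 0. Define the bilinear form b(v,w) = \sum_{i=1}^d b_i v(i) w(i) on \mathbb{F}^d. If V is a subspace of \mathbb{F}^d such that b(v,w) = 0 for all v, w \in V, then dim(V) \leq (d+z)/2. -/
/-!
Write the form as `b(v, w) = ⟨Dv, w⟩` with `D = diag(b)` and `⟨·,·⟩` the nondegenerate dot
product, so its kernel is `ker D`, of dimension `z`. For any bilinear form `B` on `E` and any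
subspace `V`, `dim V + dim V^⊥ = dim E + dim (V ⊓ ker B)`; if `V` is totally isotropic then
`V ≤ V^⊥`, whence `2 dim V ≤ dim E + dim ker B = d + z`.
-/

open Module LinearMap Matrix

theorem LinearMap.BilinForm.two_mul_finrank_le_of_le_orthogonal {K E : Type*} [Field K]
    [AddCommGroup E] [Module K E] [FiniteDimensional K E] (B : LinearMap.BilinForm K E)
    {V : Submodule K E} (hV : V ≤ B.orthogonal V) :
    2 * finrank K V ≤ finrank K E + finrank K (ker B) := by
  have hsum := finrank_add_finrank_orthogonal' (B := B) V
  have horth := Submodule.finrank_mono hV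
  have hker := Submodule.finrank_mono (inf_le_right : V ⊓ ker B ≤ ker B)
  omega

namespace Matrix

variable {K ι : Type*} [Field K] [Fintype ι] [DecidableEq ι]

theorem finrank_ker_toLin'_diagonal (w : ι → K) :
    finrank K (ker (toLin' (diagonal w))) = Nat.card {i // w i = 0} := by
  classical
  have hnull := finrank_range_add_finrank_ker (toLin' (diagonal w))
  have hrange : finrank K (range (toLin' (diagonal w))) =
      Fintype.card ι - Fintype.card {i // w i = 0} := by
    rw [← Fintype.card_subtype_compl]
    exact rank_diagonal w
  have hle := Fintype.card_subtype_le (fun i => w i = 0)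
  rw [finrank_fintype_fun_eq_card] at hnull
  rw [Nat.card_eq_fintype_card]
  omega

def diagonalBilinForm (b : ι → K) : LinearMap.BilinForm K (ι → K) :=
  (dotProductEquiv K ι).toLinearMap ∘ₗ toLin' (diagonal b)

theorem diagonalBilinForm_apply (b : ι → K) (v w : ι → K) :
    diagonalBilinForm b v w = ∑ i, b i * v i * w i := by
  simp [diagonalBilinForm, mulVec_diagonal, dotProduct]

theorem ker_diagonalBilinForm (b : ι → K) :
    ker (diagonalBilinForm b) = ker (toLin' (diagonal b)) :=
  LinearEquiv.ker_comp _ _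

end Matrix

open Finset

/-- If `b(v,w) = ∑ bᵢ v(i) w(i)` vanishes on `V × V`, then `dim V ≤ (d + z)/2`,
where `z` is the number of zero coefficients among the `bᵢ`. -/
theorem bilinear_selforthogonal_dim {𝔽 : Type*} [Field 𝔽] {d : ℕ} (b : Fin d → 𝔽)
    (V : Submodule 𝔽 (Fin d → 𝔽))
    (hV : ∀ v ∈ V, ∀ w ∈ V, ∑ i, b i * v i * w i = 0) :
    2 * Module.finrank 𝔽 V ≤ d + {i : Fin d | b i = 0}.ncard := by
  have hle : V ≤ (diagonalBilinForm b).orthogonal V := fun w hw v hv =>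
    (diagonalBilinForm_apply b v w).trans (hV v hv w hw)
  have := LinearMap.BilinForm.two_mul_finrank_le_of_le_orthogonal _ hle
  rwa [finrank_fin_fun, ker_diagonalBilinForm, finrank_ker_toLin'_diagonal] at this
end

section
/- Let p be a prime and let V be a subspace of \mathbb{F}_p^n. Then the number of 0-1 vectors in V is at most 2^{dim(V)}. -/
/-!
The coordinate functionals restricted to `V` span its dual, so `dim V` of them form a basis of
`V*`. A vector of `V` is therefore determined by these `dim V` coordinates, and for a 0-1 vector
each of them takes one of two values.
-/

open Module

namespace Submodule

variable {K ι : Type*} [Field K]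

theorem dualCoannihilator_span_range_coord_eq_bot (V : Submodule K (ι → K)) :
    (span K (Set.range fun i => (LinearMap.proj i).comp V.subtype : Set (Dual K V))
      ).dualCoannihilator = ⊥ := by
  rw [eq_bot_iff]
  intro v hv
  rw [← SetLike.mem_coe, coe_dualCoannihilator_span] at hv
  ext i
  exact hv _ ⟨i, rfl⟩

theorem exists_finset_card_eq_finrank_injective_restrict (V : Submodule K (ι → K))
    [FiniteDimensional K V] :
    ∃ s : Finset ι, s.card = finrank K V ∧
      Function.Injective fun (v : V) (i : s) => (v : ι → K) i := by
  set φ : ι → Dual K V := fun i => (LinearMap.proj i).comp V.subtype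
  obtain ⟨b, -, -, hspan, hli⟩ := exists_linearIndepOn_extension (linearIndepOn_empty K φ)
    (Set.empty_subset .univ)
  have hW : span K (φ '' b) = span K (Set.range φ) :=
    le_antisymm (span_mono (Set.image_subset_range φ b)) (span_le.2 (by simpa using hspan))
  have hcoann := dualCoannihilator_span_range_coord_eq_bot V
  have hb : b.Finite := Set.finite_coe_iff.mp hli.finite
  refine ⟨hb.toFinset, ?_, ?_⟩
  · have := hb.fintype
    have hrank := Subspace.finrank_add_finrank_dualCoannihilator_eq (span K (Set.range φ))
    have hcard := finrank_span_eq_card hli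
    rw [← Set.image_eq_range, hW] at hcard
    rw [hcoann, finrank_bot, add_zero, hcard] at hrank
    rw [Set.Finite.card_toFinset, hrank]
  · intro v w hvw
    rw [← sub_eq_zero, ← mem_bot K, ← hcoann, ← hW, ← SetLike.mem_coe, coe_dualCoannihilator_span]
    rintro _ ⟨i, hi, rfl⟩
    have := congrFun hvw ⟨i, hb.mem_toFinset.2 hi⟩
    simpa [φ, sub_eq_zero] using this

theorem ncard_setOf_mem_forall_mem_le (V : Submodule K (ι → K)) [FiniteDimensional K V]
    (A : Finset K) : {v : ι → K | v ∈ V ∧ ∀ i, v i ∈ A}.ncard ≤ A.card ^ finrank K V := by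
  obtain ⟨s, hs, hinj⟩ := V.exists_finset_card_eq_finrank_injective_restrict
  let restrict (v : {v : ι → K | v ∈ V ∧ ∀ i, v i ∈ A}) (i : s) : A := ⟨v.1 i, v.2.2 i⟩
  have hrestrict : Function.Injective restrict := fun v w hvw => by
    have : (⟨v, v.2.1⟩ : V) = ⟨w, w.2.1⟩ :=
      hinj (funext fun i => congrArg Subtype.val (congrFun hvw i))
    exact Subtype.ext (Subtype.mk.inj this)
  calc _ = Nat.card {v : ι → K | v ∈ V ∧ ∀ i, v i ∈ A} := (Nat.card_coe_set_eq _).symm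
    _ ≤ Nat.card (s → A) := Nat.card_le_card_of_injective restrict hrestrict
    _ = A.card ^ finrank K V := by simp [Nat.card_fun, hs]

end Submodule

theorem zero_one_vectors_in_subspace_general {p n : ℕ} [Fact p.Prime]
    (V : Submodule (ZMod p) (Fin n → ZMod p)) :
    {v : Fin n → ZMod p | v ∈ V ∧ ∀ i, v i = 0 ∨ v i = 1}.ncard
      ≤ 2 ^ Module.finrank (ZMod p) V := by
  have h01 : {v : Fin n → ZMod p | v ∈ V ∧ ∀ i, v i = 0 ∨ v i = 1} =
      {v | v ∈ V ∧ ∀ i, v i ∈ ({0, 1} : Finset (ZMod p))} := by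
    simp only [Finset.mem_insert, Finset.mem_singleton]
  rw [h01]
  exact (V.ncard_setOf_mem_forall_mem_le _).trans
    (Nat.pow_le_pow_left Finset.card_le_two _)

/-- Odlyzko: a subspace `V ≤ 𝔽_p^n` contains at most `2 ^ dim V` zero-one vectors. -/
theorem zero_one_vectors_in_subspace {p n : ℕ} (hp : p.Prime) [Fact p.Prime]
    (V : Submodule (ZMod p) (Fin n → ZMod p)) :
    {v : Fin n → ZMod p | v ∈ V ∧ ∀ i, v i = 0 ∨ v i = 1}.ncard
      ≤ 2 ^ Module.finrank (ZMod p) V :=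
  zero_one_vectors_in_subspace_general V
end

section
/- Let \ell, m, n be positive integers and let A_1,...,A_m, B_1,...,B_m \subset [n] be sets such that \ell does not divide |A_i \cap B_i| for each i \in [m], but \ell divides |A_i \cap B_j| whenever i \neq j. Then m \leq s n, where s is the number of distinct prime divisors of \ell. -/
/-!
Fix a prime `p` with `p ^ a ∥ ℓ` and let `S_p` be the indices `i` with `p ^ a ∤ |Aᵢ ∩ Bᵢ|`.
The intersection matrix `(|Aᵢ ∩ Bⱼ|)_{i,j ∈ S_p}` is the product of the integer incidence
matrices of the `Aᵢ` and of the `Bⱼ`, and it is nonsingular: in a vanishing integer combination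
of its rows, comparing `p`-adic valuations column by column shows that every coefficient is
divisible by every power of `p`. Hence the incidence vectors of the `Aᵢ`, `i ∈ S_p`, are
independent in `ℤⁿ` and `|S_p| ≤ n`. Since `ℓ ∤ |Aᵢ ∩ Bᵢ|`, every `i` lies in some `S_p`.
-/

open Finset

theorem Prime.pow_succ_dvd_of_pow_add_dvd_mul {M : Type*} [CommMonoidWithZero M]
    [IsCancelMulZero M] {p x d : M} (hp : Prime p) {a t : ℕ} (hd : ¬ p ^ a ∣ d)
    (h : p ^ (t + a) ∣ x * d) : p ^ (t + 1) ∣ x := by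
  rw [pow_dvd_iff_le_emultiplicity, not_le] at hd
  rw [pow_dvd_iff_le_emultiplicity, emultiplicity_mul hp] at h
  rw [pow_dvd_iff_le_emultiplicity]
  generalize emultiplicity p x = e at *
  generalize emultiplicity p d = f at *
  push_cast at *
  enat_to_nat
  omega

namespace Matrix

variable {ι κ μ R : Type*}

theorem linearIndependent_row_of_prime_pow_dvd [Fintype ι] [CommRing R] [IsDomain R]
    [WfDvdMonoid R] {D : Matrix ι ι R} {p : R} (hp : Prime p) {a : ℕ}
    (hdiag : ∀ i, ¬ p ^ a ∣ D i i) (hoff : ∀ i j, i ≠ j → p ^ a ∣ D i j) :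
    LinearIndependent R D.row := by
  classical
  rw [Fintype.linearIndependent_iff]
  intro g hg
  have hdiag_term : ∀ j, g j * D j j = -∑ i ∈ univ.erase j, g i * D i j := fun j => by
    rw [eq_neg_iff_add_eq_zero, add_sum_erase _ (fun i => g i * D i j) (mem_univ j)]
    simpa using congrFun hg j
  have hpow : ∀ t i, p ^ t ∣ g i := by
    intro t
    induction t with
    | zero => simp
    | succ t ih =>
      refine fun j => hp.pow_succ_dvd_of_pow_add_dvd_mul (hdiag j) ?_
      rw [hdiag_term, dvd_neg, pow_add]
      exact dvd_sum fun i hi => mul_dvd_mul (ih i) (hoff i j (ne_of_mem_erase hi))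
  intro i
  by_contra hi
  obtain ⟨t, ht⟩ := FiniteMultiplicity.of_prime_left hp hi
  exact ht (hpow _ i)

theorem linearIndependent_row_of_linearIndependent_row_mul [Fintype κ] [CommSemiring R]
    {U : Matrix ι κ R} {W : Matrix κ μ R} (h : LinearIndependent R (U * W).row) :
    LinearIndependent R U.row :=
  h.of_comp (vecMulLinear W)

end Matrix

section Incidence

variable {ι α : Type*} [Fintype α] [DecidableEq α]

def incidenceMatrix (R : Type*) [Zero R] [One R] (A : ι → Finset α) : Matrix ι α R :=
  Matrix.of fun i x => if x ∈ A i then 1 else 0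

theorem incidenceMatrix_mul_transpose {R : Type*} [NonAssocSemiring R] (A B : ι → Finset α)
    (i j : ι) :
    (incidenceMatrix R A * (incidenceMatrix R B).transpose) i j = #(A i ∩ B j) := by
  simp [incidenceMatrix, Matrix.mul_apply, ← ite_and, ← mem_inter, inter_comm]

end Incidence

theorem card_le_card_of_prime_pow_dvd_card_inter {ι α : Type*} [Fintype ι] [Fintype α]
    [DecidableEq α] (A B : ι → Finset α) {p a : ℕ} (hp : p.Prime)
    (hdiag : ∀ i, ¬ p ^ a ∣ #(A i ∩ B i)) (hoff : ∀ i j, i ≠ j → p ^ a ∣ #(A i ∩ B j)) :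
    Fintype.card ι ≤ Fintype.card α := by
  have hindep : LinearIndependent ℤ (incidenceMatrix ℤ A).row := by
    refine Matrix.linearIndependent_row_of_linearIndependent_row_mul
      (W := (incidenceMatrix ℤ B).transpose) ?_
    refine Matrix.linearIndependent_row_of_prime_pow_dvd (Nat.prime_iff_prime_int.mp hp)
      (a := a) (fun i => ?_) (fun i j hij => ?_)
    · rw [incidenceMatrix_mul_transpose]
      exact_mod_cast hdiag i
    · rw [incidenceMatrix_mul_transpose]
      exact_mod_cast hoff i j hij
  simpa using hindep.fintype_card_le_finrank

theorem Nat.exists_mem_primeFactors_not_ordProj_dvd {ℓ d : ℕ} (hℓ : ℓ ≠ 0) (h : ¬ ℓ ∣ d) :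
    ∃ p ∈ ℓ.primeFactors, ¬ p ^ ℓ.factorization p ∣ d := by
  obtain ⟨p, k, hp, hkℓ, hkd⟩ : ∃ p k, p.Prime ∧ p ^ k ∣ ℓ ∧ ¬ p ^ k ∣ d := by
    simpa [Nat.dvd_iff_prime_pow_dvd_dvd d ℓ] using h
  have hk : k ≠ 0 := by rintro rfl; simp at hkd
  refine ⟨p, mem_primeFactors.mpr ⟨hp, (dvd_pow_self p hk).trans hkℓ, hℓ⟩, fun hd => hkd ?_⟩
  exact (pow_dvd_pow p ((hp.pow_dvd_iff_le_factorization hℓ).mp hkℓ)).trans hd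

theorem oddtown_mod_ell_general {ℓ m n : ℕ} (hℓ : 1 ≤ ℓ)
    (A B : Fin m → Finset (Fin n))
    (hdiag : ∀ i, ¬ ℓ ∣ (A i ∩ B i).card)
    (hoff : ∀ i j, i ≠ j → ℓ ∣ (A i ∩ B j).card) :
    m ≤ ℓ.primeFactors.card * n := by
  set S : ℕ → Finset (Fin m) := fun p => {i | ¬ p ^ ℓ.factorization p ∣ #(A i ∩ B i)}
  have hS : ∀ p ∈ ℓ.primeFactors, #(S p) ≤ n := fun p hp => by
    simpa using card_le_card_of_prime_pow_dvd_card_inter (fun i : S p => A i) (fun i => B i)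
      (Nat.prime_of_mem_primeFactors hp) (fun i => (mem_filter.mp i.2).2)
      (fun i j hij => (Nat.ordProj_dvd ℓ p).trans (hoff i j (Subtype.coe_ne_coe.mpr hij)))
  have hcover : univ ⊆ ℓ.primeFactors.biUnion S := fun i _ => by
    obtain ⟨p, hp, hi⟩ := Nat.exists_mem_primeFactors_not_ordProj_dvd (by omega) (hdiag i)
    exact mem_biUnion.mpr ⟨p, hp, by simpa [S] using hi⟩
  calc m = #(univ : Finset (Fin m)) := by simp
    _ ≤ #(ℓ.primeFactors.biUnion S) := card_le_card hcover
    _ ≤ ∑ p ∈ ℓ.primeFactors, #(S p) := card_biUnion_le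
    _ ≤ ℓ.primeFactors.card * n := sum_le_card_nsmul _ _ _ hS

/-- Oddtown mod `ℓ`: if `ℓ ∤ |Aᵢ ∩ Bᵢ|` but `ℓ ∣ |Aᵢ ∩ Bⱼ|` for `i ≠ j`,
then `m ≤ s·n`, where `s` is the number of distinct prime divisors of `ℓ`. -/
theorem oddtown_mod_ell {ℓ m n : ℕ} (hℓ : 1 ≤ ℓ) (hm : 1 ≤ m) (hn : 1 ≤ n)
    (A B : Fin m → Finset (Fin n))
    (hdiag : ∀ i, ¬ ℓ ∣ (A i ∩ B i).card)
    (hoff : ∀ i j, i ≠ j → ℓ ∣ (A i ∩ B j).card) :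
    m ≤ ℓ.primeFactors.card * n :=
  oddtown_mod_ell_general hℓ A B hdiag hoff
end

section
/- Let \ell, m, n be positive integers with \ell = p^{\alpha} a prime power, and let A_1,...,A_m, B_1,...,B_m \subset [n] be such that p^{\alpha} does not divide |A_i \cap B_i| for each i, while p^{\alpha} divides |A_i \cap B_j| for all i \neq j. Then the characteristic vectors of A_1,...,A_m are linearly independent over \mathbb{Q}; in particular m \leq n. -/
/-!
Write `M i j = |Aᵢ ∩ Bⱼ|`; it is the product of the characteristic-vector matrices of the `Aᵢ`
and the `Bⱼ`, so it suffices that the rows of `M` are linearly independent over `ℤ`. In an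
integer relation `c ᵥ* M = 0`, column `j` gives `p^α ∣ cⱼ Mⱼⱼ` while `p^α ∤ Mⱼⱼ`, so `p ∣ cⱼ`.
Dividing the relation by `p` and repeating, every `cⱼ` is divisible by every power of `p`,
hence zero.
-/

open Finset

namespace Matrix

variable {ι R : Type*} [Fintype ι] [DecidableEq ι] [CommRing R] [IsDomain R] {p : R} {α : ℕ}
  {M : Matrix ι ι R}

theorem prime_dvd_of_vecMul_eq_zero (hp : Prime p) (hdiag : ∀ i, ¬p ^ α ∣ M i i)
    (hoff : ∀ i j, i ≠ j → p ^ α ∣ M i j) {c : ι → R} (hc : c ᵥ* M = 0) (j : ι) :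
    p ∣ c j := by
  by_contra hpc
  have hcol : c j * M j j = -∑ i ∈ univ.erase j, c i * M i j := by
    have := congrFun hc j
    rw [vecMul, dotProduct, ← add_sum_erase _ _ (mem_univ j)] at this
    exact eq_neg_of_add_eq_zero_left this
  have hdvd : p ^ α ∣ c j * M j j := by
    rw [hcol]
    exact (dvd_sum fun i hi => (hoff i j (ne_of_mem_erase hi)).mul_left _).neg_right
  exact hdiag j (hp.pow_dvd_of_dvd_mul_left α hpc hdvd)

theorem pow_dvd_of_vecMul_eq_zero (hp : Prime p) (hdiag : ∀ i, ¬p ^ α ∣ M i i)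
    (hoff : ∀ i j, i ≠ j → p ^ α ∣ M i j) (k : ℕ) {c : ι → R} (hc : c ᵥ* M = 0) (i : ι) :
    p ^ k ∣ c i := by
  induction k generalizing c with
  | zero => simp
  | succ k ih =>
    choose d hd using prime_dvd_of_vecMul_eq_zero hp hdiag hoff hc
    have hd0 : d ᵥ* M = 0 := by
      rw [show c = p • d from funext hd, smul_vecMul] at hc
      exact (smul_eq_zero.mp hc).resolve_left hp.ne_zero
    rw [hd i, pow_succ']
    exact mul_dvd_mul_left p (ih hd0)

theorem linearIndependent_of_not_pow_dvd_diag [WfDvdMonoid R] (hp : Prime p)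
    (hdiag : ∀ i, ¬p ^ α ∣ M i i) (hoff : ∀ i j, i ≠ j → p ^ α ∣ M i j) :
    LinearIndependent R M := by
  refine Fintype.linearIndependent_iff.mpr fun c hc i => ?_
  rw [← vecMul_eq_sum] at hc
  by_contra hci
  obtain ⟨k, hk⟩ := FiniteMultiplicity.of_prime_left hp hci
  exact hk (pow_dvd_of_vecMul_eq_zero hp hdiag hoff (k + 1) hc i)

end Matrix

theorem Finset.natCast_card_inter_eq_sum {α R : Type*} [Fintype α] [DecidableEq α] [Semiring R]
    (s t : Finset α) :
    ((s ∩ t).card : R) = ∑ x, (if x ∈ t then 1 else 0) * (if x ∈ s then 1 else 0) := by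
  simp only [ite_zero_mul_ite_zero, mul_one, sum_boole, filter_and, filter_mem_eq_inter,
    inter_univ, inter_comm]

theorem prime_power_oddtown_general {p α m n : ℕ} (hp : p.Prime)
    (A B : Fin m → Finset (Fin n))
    (hdiag : ∀ i, ¬ p ^ α ∣ (A i ∩ B i).card)
    (hoff : ∀ i j, i ≠ j → p ^ α ∣ (A i ∩ B j).card) :
    LinearIndependent ℚ (fun i : Fin m => fun j : Fin n => if j ∈ A i then (1 : ℚ) else 0)
      ∧ m ≤ n := by
  let M : Matrix (Fin m) (Fin m) ℤ := fun i j => (A i ∩ B j).card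
  have hM : LinearIndependent ℤ M :=
    Matrix.linearIndependent_of_not_pow_dvd_diag (α := α) (Nat.prime_iff_prime_int.mp hp)
      (fun i => Int.natCast_dvd_natCast.not.mpr (by simpa using hdiag i))
      (fun i j hij => Int.natCast_dvd_natCast.mpr (by simpa using hoff i j hij))
  let χB : Matrix (Fin m) (Fin n) ℚ := fun j x => if x ∈ B j then 1 else 0
  have hχB : χB.mulVecLin ∘ (fun i : Fin m => fun j : Fin n => if j ∈ A i then (1 : ℚ) else 0) =
      fun i => algebraMap ℤ ℚ ∘ M i := by
    ext i j
    rw [Function.comp_apply, Function.comp_apply, eq_intCast, Int.cast_natCast,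
      natCast_card_inter_eq_sum]
    rfl
  have hA : LinearIndependent ℚ
      (fun i : Fin m => fun j : Fin n => if j ∈ A i then (1 : ℚ) else 0) :=
    .of_comp χB.mulVecLin (hχB ▸ linearIndependent_algebraMap_comp_iff.mpr hM)
  exact ⟨hA, by simpa using hA.fintype_card_le_finrank⟩

/-- Prime power oddtown: if `p^α ∤ |Aᵢ ∩ Bᵢ|` but `p^α ∣ |Aᵢ ∩ Bⱼ|` for `i ≠ j`,
then the characteristic vectors of the `Aᵢ` are linearly independent over `ℚ`;
in particular `m ≤ n`. -/
theorem prime_power_oddtown {p α m n : ℕ} (hp : p.Prime) (hα : 1 ≤ α)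
    (hm : 1 ≤ m) (hn : 1 ≤ n)
    (A B : Fin m → Finset (Fin n))
    (hdiag : ∀ i, ¬ p ^ α ∣ (A i ∩ B i).card)
    (hoff : ∀ i j, i ≠ j → p ^ α ∣ (A i ∩ B j).card) :
    LinearIndependent ℚ (fun i : Fin m => fun j : Fin n => if j ∈ A i then (1 : ℚ) else 0)
      ∧ m ≤ n :=
  prime_power_oddtown_general hp A B hdiag hoff
end

section
/- Let \ell, k be positive integers and \mathcal{F} \subset \mathbb{Z}_{\ell}^n. If \mathcal{F} is k-closed, then the span \langle \mathcal{F} \rangle over \mathbb{Z}_{\ell} is also k-closed. -/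
open Finset

/-- `F ⊆ (ℤ_ℓ)^n` is `k`-closed if for all `1 ≤ i ≤ k`, the coordinate-wise product of any
`i` members of `F` has coordinate sum zero. -/
def KClosed {ℓ n : ℕ} (k : ℕ) (F : Set (Fin n → ZMod ℓ)) : Prop :=
  ∀ i : ℕ, 1 ≤ i → i ≤ k → ∀ f : Fin i → (Fin n → ZMod ℓ), (∀ j, f j ∈ F) →
    ∑ x : Fin n, ∏ j, f j x = 0

/-!
The map `(v₁, …, vᵢ) ↦ ‖v₁ ⋯ vᵢ‖` is multilinear, and a multilinear map vanishing on all tuples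
from `F` vanishes on all tuples from `⟨F⟩`: replace the entries by elements of the span one
coordinate at a time, each time using that a linear map vanishing on `F` vanishes on `⟨F⟩`.
-/

namespace MultilinearMap

variable {R M N ι : Type*} [CommSemiring R] [AddCommMonoid M] [Module R M]
  [AddCommMonoid N] [Module R N] [DecidableEq ι] (g : MultilinearMap R (fun _ : ι => M) N)

lemma eq_zero_of_forall_mem_update_span {t : ι → Set M}
    (h : ∀ f : ι → M, (∀ j, f j ∈ t j) → g f = 0) (a : ι) (f : ι → M)
    (hf : ∀ j, f j ∈ Function.update t a (Submodule.span R (t a) : Set M) j) : g f = 0 := by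
  have hspan : Submodule.span R (t a) ≤ LinearMap.ker (g.toLinearMap f a) := by
    refine Submodule.span_le.mpr fun v hv => ?_
    refine h _ fun j => ?_
    rcases eq_or_ne j a with rfl | hja
    · simpa using hv
    · simpa [hja] using hf j
  have hfa : f a ∈ Submodule.span R (t a) := by simpa using hf a
  simpa using hspan hfa

lemma eq_zero_of_forall_mem_piecewise_span {t : ι → Set M}
    (h : ∀ f : ι → M, (∀ j, f j ∈ t j) → g f = 0) (s : Finset ι) (f : ι → M)
    (hf : ∀ j, f j ∈ s.piecewise (fun j => (Submodule.span R (t j) : Set M)) t j) :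
    g f = 0 := by
  induction s using Finset.induction_on generalizing f with
  | empty => exact h f (by simpa using hf)
  | @insert a s ha ih =>
    refine g.eq_zero_of_forall_mem_update_span ih a f fun j => ?_
    simpa [Finset.piecewise_insert, ha] using hf j

lemma eq_zero_of_forall_mem_span [Fintype ι] {F : Set M}
    (h : ∀ f : ι → M, (∀ j, f j ∈ F) → g f = 0) (f : ι → M)
    (hf : ∀ j, f j ∈ Submodule.span R F) : g f = 0 :=
  g.eq_zero_of_forall_mem_piecewise_span (t := fun _ => F) h Finset.univ f (by simpa using hf)

end MultilinearMap

section

variable (R : Type*) [CommSemiring R] (ι κ : Type*) [Fintype ι] [Fintype κ]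

def sumProdCoord : MultilinearMap R (fun _ : ι => κ → R) R :=
  ∑ x : κ, (MultilinearMap.mkPiAlgebra R ι R).compLinearMap fun _ => LinearMap.proj x

@[simp]
lemma sumProdCoord_apply (f : ι → κ → R) : sumProdCoord R ι κ f = ∑ x, ∏ j, f j x := by
  simp [sumProdCoord, MultilinearMap.mkPiAlgebra_apply]

end

theorem kClosed_span_general {ℓ n k : ℕ}
    (F : Set (Fin n → ZMod ℓ)) (hF : KClosed k F) :
    KClosed k (Submodule.span (ZMod ℓ) F : Set (Fin n → ZMod ℓ)) := by
  intro i hi hik f hf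
  simpa using (sumProdCoord (ZMod ℓ) (Fin i) (Fin n)).eq_zero_of_forall_mem_span
    (fun f' hf' => by simpa using hF i hi hik f' hf') f hf

/-- If `F ⊆ (ℤ_ℓ)^n` is `k`-closed, then so is its span over `ℤ_ℓ`. -/
theorem kClosed_span {ℓ n k : ℕ} (hℓ : 1 ≤ ℓ) (hk : 1 ≤ k)
    (F : Set (Fin n → ZMod ℓ)) (hF : KClosed k F) :
    KClosed k (Submodule.span (ZMod ℓ) F : Set (Fin n → ZMod ℓ)) :=
  kClosed_span_general F hF
end

section
/- Let p be a prime, let V be a subspace of \mathbb{F}_p^n, and let A_1,...,A_d be a partition of [n] such that every vector in V is constant on each A_i. Suppose that \sum_{i=1}^n u(i) v(i) = 0 for all u, v \in V (i.e., V is 2-closed). If dim(V) \geq d - h, then at least d - 2h of the numbers |A_1|,...,|A_d| are divisible by p. -/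
/-!
Choose a representative in each block. Since vectors of `V` are constant on blocks, reading them
off at the representatives embeds `V` into `𝔽_p^d`, and the standard form on `V` becomes the
diagonal form `∑ |A_i| x_i y_i`, so the image is totally isotropic for it. The weights vanish
exactly on the blocks of size divisible by `p`; away from them the form is nondegenerate, so an
isotropic subspace has dimension at most half the number of remaining coordinates. Hence
`2 dim V ≤ d + #{i | p ∣ |A_i|}`, which together with `dim V ≥ d - h` gives the claim.
-/

open Finset Module

section Blocks

variable {α ι M : Type*} [Fintype α] [Fintype ι] [DecidableEq α]

theorem sum_eq_sum_card_nsmul_of_forall_mem_eq [AddCommMonoid M] (A : ι → Finset α)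
    (hdisj : ∀ i j, i ≠ j → Disjoint (A i) (A j)) (hcover : univ.biUnion A = univ)
    (r : ι → α) (f : α → M) (hf : ∀ i, ∀ a ∈ A i, f a = f (r i)) :
    ∑ a, f a = ∑ i, #(A i) • f (r i) := by
  rw [← hcover, sum_biUnion fun i _ j _ hij => hdisj i j hij]
  refine sum_congr rfl fun i _ => ?_
  rw [sum_congr rfl (hf i), sum_const]

theorem eq_zero_of_forall_mem_eq_of_comp_eq_zero [Zero M] (A : ι → Finset α)
    (hcover : univ.biUnion A = univ) (r : ι → α) (v : α → M)
    (hv : ∀ i, ∀ a ∈ A i, v a = v (r i)) (h0 : v ∘ r = 0) : v = 0 := by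
  funext a
  obtain ⟨i, -, ha⟩ := mem_biUnion.mp (hcover ▸ mem_univ a : a ∈ univ.biUnion A)
  rw [hv i a ha]
  exact congrFun h0 i

end Blocks

theorem Submodule.finrank_le_finrank_map_add_finrank_ker {K V V₂ : Type*} [Field K]
    [AddCommGroup V] [Module K V] [AddCommGroup V₂] [Module K V₂] [FiniteDimensional K V]
    (f : V →ₗ[K] V₂) (W : Submodule K V) :
    finrank K W ≤ finrank K (W.map f) + finrank K (LinearMap.ker f) := by
  have hrank := LinearMap.finrank_range_add_finrank_ker (f.domRestrict W)
  have hker : finrank K (LinearMap.ker (f.domRestrict W)) ≤ finrank K (LinearMap.ker f) :=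
    calc finrank K (LinearMap.ker (f.domRestrict W))
        = finrank K ((LinearMap.ker (f.domRestrict W)).map W.subtype) :=
          (Submodule.finrank_map_subtype_eq _ _).symm
      _ ≤ finrank K (LinearMap.ker f) :=
          Submodule.finrank_mono (by rintro _ ⟨x, hx, rfl⟩; exact hx)
  rw [LinearMap.range_domRestrict] at hrank
  omega

section DiagonalForm

variable {K ι : Type*} [Field K] [Fintype ι]

theorem two_mul_finrank_le_card_of_isotropic_of_ne_zero [DecidableEq ι] {c : ι → K}
    (hc : ∀ i, c i ≠ 0) {W : Submodule K (ι → K)}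
    (hW : ∀ x ∈ W, ∀ y ∈ W, ∑ i, c i * x i * y i = 0) :
    2 * finrank K W ≤ Fintype.card ι := by
  set B : LinearMap.BilinForm K (ι → K) := Matrix.toLinearMap₂' K (Matrix.diagonal c)
  have hB : B.Nondegenerate :=
    LinearMap.nondegenerate_toLinearMap₂'_of_det_ne_zero' <| by
      simpa [Matrix.det_diagonal, prod_ne_zero_iff] using hc
  have hle : W ≤ B.orthogonal W := fun y hy =>
    LinearMap.BilinForm.mem_orthogonal_iff.mpr fun x hx => by
      rw [Matrix.toLinearMap₂'_apply', ← hW x hx y hy]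
      exact sum_congr rfl fun i _ => by rw [Matrix.mulVec_diagonal]; ring
  have h₁ := Submodule.finrank_mono hle
  have h₂ := Submodule.finrank_le W
  rw [LinearMap.BilinForm.finrank_orthogonal hB, Module.finrank_fintype_fun_eq_card] at h₁
  rw [Module.finrank_fintype_fun_eq_card] at h₂
  omega

theorem two_mul_finrank_le_card_add_card_zero_of_isotropic [DecidableEq K] {c : ι → K}
    {W : Submodule K (ι → K)} (hW : ∀ x ∈ W, ∀ y ∈ W, ∑ i, c i * x i * y i = 0) :
    2 * finrank K W ≤ Fintype.card ι + #{i | c i = 0} := by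
  classical
  set f := LinearMap.funLeft K K (Subtype.val : {i // c i ≠ 0} → ι)
  have hmap : 2 * finrank K (W.map f) ≤ Fintype.card {i // c i ≠ 0} := by
    refine two_mul_finrank_le_card_of_isotropic_of_ne_zero (c := c ∘ Subtype.val)
      (fun i => i.2) ?_
    rintro _ ⟨x, hx, rfl⟩ _ ⟨y, hy, rfl⟩
    refine Eq.trans ?_ (hW x hx y hy)
    rw [← Fintype.sum_subtype_add_sum_subtype (fun i => c i ≠ 0),
      Fintype.sum_eq_zero (fun i : {i // ¬c i ≠ 0} => c i * x i * y i)
        fun i => by simp [not_not.mp i.2],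
      add_zero]
    rfl
  have hcard : Fintype.card {i // c i ≠ 0} + #{i | c i = 0} = Fintype.card ι := by
    rw [Fintype.card_subtype_compl, Fintype.card_subtype]
    have := card_le_univ (univ.filter fun i => c i = 0)
    omega
  have hker : finrank K (LinearMap.ker f) = #{i | c i = 0} := by
    have hrange : LinearMap.range f = ⊤ := LinearMap.range_eq_top.mpr
      (LinearMap.funLeft_surjective_of_injective _ _ _ Subtype.val_injective)
    have := LinearMap.finrank_range_add_finrank_ker f
    rw [hrange, finrank_top, finrank_fintype_fun_eq_card, finrank_fintype_fun_eq_card] at this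
    omega
  have := Submodule.finrank_le_finrank_map_add_finrank_ker f W
  omega

end DiagonalForm

theorem twins_sizes_divisible_general {p n d h : ℕ} [Fact p.Prime]
    (V : Submodule (ZMod p) (Fin n → ZMod p))
    (A : Fin d → Finset (Fin n))
    (hne : ∀ i, (A i).Nonempty)
    (hdisj : ∀ i j, i ≠ j → Disjoint (A i) (A j))
    (hcover : Finset.univ.biUnion A = Finset.univ)
    (hconst : ∀ v ∈ V, ∀ i, ∀ a ∈ A i, ∀ b ∈ A i, v a = v b)
    (hclosed : ∀ u ∈ V, ∀ v ∈ V, ∑ x, u x * v x = 0)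
    (hdim : d - h ≤ Module.finrank (ZMod p) V) :
    d - 2 * h ≤ (Finset.univ.filter fun i : Fin d => p ∣ (A i).card).card := by
  choose r hr using hne
  have hrep : ∀ v ∈ V, ∀ i, ∀ a ∈ A i, v a = v (r i) :=
    fun v hv i a ha => hconst v hv i a ha (r i) (hr i)
  set φ := LinearMap.funLeft (ZMod p) (ZMod p) r ∘ₗ V.subtype
  have hφ : Function.Injective φ := (injective_iff_map_eq_zero φ).mpr fun v hv =>
    Subtype.ext <| eq_zero_of_forall_mem_eq_of_comp_eq_zero A hcover r _ (hrep v v.2) hv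
  have hiso : ∀ x ∈ LinearMap.range φ, ∀ y ∈ LinearMap.range φ,
      ∑ i, ((A i).card : ZMod p) * x i * y i = 0 := by
    rintro _ ⟨u, rfl⟩ _ ⟨v, rfl⟩
    rw [← hclosed u u.2 v v.2, sum_eq_sum_card_nsmul_of_forall_mem_eq A hdisj hcover r _
      fun i a ha => by rw [hrep u u.2 i a ha, hrep v v.2 i a ha]]
    simp [φ, nsmul_eq_mul, mul_assoc]
  have hbound := two_mul_finrank_le_card_add_card_zero_of_isotropic hiso
  simp only [LinearMap.finrank_range_of_inj hφ, Fintype.card_fin,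
    ZMod.natCast_eq_zero_iff] at hbound
  omega

/-- If `V ≤ 𝔽_p^n` is 2-closed, constant on each block of a partition `A₁,…,A_d` of `[n]`,
and `dim V ≥ d - h`, then at least `d - 2h` of the block sizes are divisible by `p`. -/
theorem twins_sizes_divisible {p n d h : ℕ} (hp : p.Prime) [Fact p.Prime]
    (V : Submodule (ZMod p) (Fin n → ZMod p))
    (A : Fin d → Finset (Fin n))
    (hne : ∀ i, (A i).Nonempty)
    (hdisj : ∀ i j, i ≠ j → Disjoint (A i) (A j))
    (hcover : Finset.univ.biUnion A = Finset.univ)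
    (hconst : ∀ v ∈ V, ∀ i, ∀ a ∈ A i, ∀ b ∈ A i, v a = v b)
    (hclosed : ∀ u ∈ V, ∀ v ∈ V, ∑ x, u x * v x = 0)
    (hdim : d - h ≤ Module.finrank (ZMod p) V) :
    d - 2 * h ≤ (Finset.univ.filter fun i : Fin d => p ∣ (A i).card).card :=
  twins_sizes_divisible_general V A hne hdisj hcover hconst hclosed hdim
end

section
/- Let \ell, k be positive integers and let s be the number of distinct prime divisors of \ell. If \mathcal{F} \subset 2^{[n]} is weakly k-closed over \mathbb{Z}_\ell (the intersection of any k distinct members of \mathcal{F} has size divisible by \ell), then there exists \mathcal{F}' \subset \mathcal{F} with |\mathcal{F}'| \geq |\mathcal{F}| - s k^2 n such that \mathcal{F}' is k-closed over \mathbb{Z}_\ell (the intersection of any k not-necessarily-distinct members has size divisible by \ell). -/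
/-!
Fix a prime power `p ^ a` exactly dividing `ℓ`. Repeatedly pick a subfamily `S` of fewer than `k`
members that meets the surviving family `L` and whose intersection `A` has size not divisible by
`p ^ a`, choosing `v_p |A|` minimal and then `|S|` maximal; record `A` with a member `X ∈ S ∩ L` and
delete `S` from `L`. The choice forces `p ^ (v_p |A| + 1) ∣ |A ∩ H|` for every `H ∈ F \ S`, so the
matrix `(|A_i ∩ X_j| / p ^ v_p |A_i|)` is lower triangular with unit diagonal modulo `p`, hence
nonsingular; as it factors through `ℚ ^ n`, there are at most `n` steps, each deleting at most
`k - 1` sets. Intersecting the surviving families over the primes dividing `ℓ` gives `F'`.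
-/

open Finset

namespace Matrix

variable {ι κ : Type*} [Fintype ι] [DecidableEq ι]

theorem det_ne_zero_of_isLowerTriangular_mod [LinearOrder ι] {p : ℕ} (hp : p.Prime)
    (N : Matrix ι ι ℤ) (hupper : ∀ i j, i < j → (p : ℤ) ∣ N i j)
    (hdiag : ∀ i, ¬ (p : ℤ) ∣ N i i) : N.det ≠ 0 := by
  have := Fact.mk hp
  intro hdet
  have hlower : ((Int.castRingHom (ZMod p)).mapMatrix N).IsLowerTriangular := fun i j hij =>
    (ZMod.intCast_zmod_eq_zero_iff_dvd _ p).2 (hupper i j hij)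
  have := RingHom.map_det (Int.castRingHom (ZMod p)) N
  rw [hdet, map_zero, det_of_isLowerTriangular _ hlower] at this
  obtain ⟨i, -, hi⟩ := prod_eq_zero_iff.1 this.symm
  exact hdiag i ((ZMod.intCast_zmod_eq_zero_iff_dvd _ p).1 hi)

theorem card_le_card_of_det_mul_ne_zero [Fintype κ] {K : Type*} [Field K]
    (X : Matrix ι κ K) (Y : Matrix κ ι K) (h : (X * Y).det ≠ 0) :
    Fintype.card ι ≤ Fintype.card κ := by
  rw [← rank_of_isUnit _ ((isUnit_iff_isUnit_det _).2 (isUnit_iff_ne_zero.2 h))]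
  exact (rank_mul_le_left X Y).trans (rank_le_card_width X)

end Matrix

theorem Fintype.card_le_of_pow_dvd_card_inter_triangular {ι α : Type*} [Fintype ι]
    [DecidableEq ι] [LinearOrder ι] [Fintype α] [DecidableEq α] {p : ℕ} (hp : p.Prime)
    (A B : ι → Finset α) (b : ι → ℕ) (hdvd : ∀ i j, p ^ b i ∣ #(A i ∩ B j))
    (hupper : ∀ i j, i < j → p ^ (b i + 1) ∣ #(A i ∩ B j))
    (hdiag : ∀ i, ¬ p ^ (b i + 1) ∣ #(A i ∩ B i)) :
    Fintype.card ι ≤ Fintype.card α := by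
  set c : ι → ι → ℕ := fun i j => #(A i ∩ B j) / p ^ b i
  have hc : ∀ i j, p ^ b i * c i j = #(A i ∩ B j) := fun i j => Nat.mul_div_cancel' (hdvd i j)
  have hc_dvd : ∀ i j, p ∣ c i j ↔ p ^ (b i + 1) ∣ #(A i ∩ B j) := fun i j => by
    rw [← hc, pow_succ, Nat.mul_dvd_mul_iff_left (pow_pos hp.pos _)]
  have hdet : (Matrix.of fun i j => (c i j : ℤ)).det ≠ 0 :=
    Matrix.det_ne_zero_of_isLowerTriangular_mod hp _
      (fun i j hij => Int.natCast_dvd_natCast.2 ((hc_dvd i j).2 (hupper i j hij)))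
      (fun i hi => hdiag i ((hc_dvd i i).1 (Int.natCast_dvd_natCast.1 hi)))
  set X : Matrix ι α ℚ := .of fun i x => if x ∈ A i then ((p : ℚ) ^ b i)⁻¹ else 0
  set Y : Matrix α ι ℚ := .of fun x j => if x ∈ B j then 1 else 0
  refine Matrix.card_le_card_of_det_mul_ne_zero X Y ?_
  have hXY : X * Y = (Int.castRingHom ℚ).mapMatrix (Matrix.of fun i j => (c i j : ℤ)) := by
    ext i j
    have : (c i j : ℚ) = #(A i ∩ B j) / (p : ℚ) ^ b i := by
      rw [eq_div_iff (pow_ne_zero _ (Nat.cast_ne_zero.2 hp.ne_zero))]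
      exact_mod_cast (mul_comm _ _).trans (hc i j)
    simp [X, Y, Matrix.mul_apply, this, div_eq_mul_inv, inter_comm]
  rw [hXY, ← RingHom.map_det]
  simpa using hdet

section Greedy

variable {α : Type*} [Fintype α] [DecidableEq α] {p a k : ℕ} [Fact p.Prime]
  {F : Finset (Finset α)}

def IsBadSubfamily (p a k : ℕ) (F L S : Finset (Finset α)) : Prop :=
  S ⊆ F ∧ (S ∩ L).Nonempty ∧ #S < k ∧ ¬ p ^ a ∣ #(S.inf id)

theorem exists_isBadSubfamily_pow_succ_dvd_card_inter
    (hq : ∀ S ⊆ F, #S = k → p ^ a ∣ #(S.inf id)) {L : Finset (Finset α)}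
    (h : ∃ S, IsBadSubfamily p a k F L S) :
    ∃ S, IsBadSubfamily p a k F L S ∧
      ∀ H ∈ F, H ∉ S → p ^ (padicValNat p #(S.inf id) + 1) ∣ #(S.inf id ∩ H) := by
  classical
  obtain ⟨S, hS, hmin⟩ := (F.powerset.filter (IsBadSubfamily p a k F L)).exists_min_image
    (fun S => toLex (padicValNat p #(S.inf id), k - #S))
    (h.imp fun S hS => mem_filter.2 ⟨mem_powerset.2 hS.1, hS⟩)
  obtain ⟨-, hSF, hSL, hSk, hndvd⟩ := mem_filter.1 hS
  refine ⟨S, ⟨hSF, hSL, hSk, hndvd⟩, fun H hH hHS => ?_⟩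
  have hA : #(S.inf id) ≠ 0 := fun h0 => hndvd (h0 ▸ dvd_zero _)
  have hlt_a : padicValNat p #(S.inf id) < a := by
    rwa [padicValNat_dvd_iff_le hA, not_le] at hndvd
  by_cases hdvd : p ^ a ∣ #(S.inf id ∩ H)
  · exact (pow_dvd_pow p hlt_a).trans hdvd
  have hinsert : (insert H S).inf id = S.inf id ∩ H := by
    rw [inf_insert, inter_comm]; rfl
  have hbad : IsBadSubfamily p a k F L (insert H S) := by
    refine ⟨insert_subset hH hSF, hSL.mono (inter_subset_inter_right (subset_insert _ _)),
      ?_, by rwa [hinsert]⟩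
    rw [card_insert_of_notMem hHS]
    refine (Nat.succ_le_of_lt hSk).lt_of_ne fun hk => hdvd ?_
    rw [← hinsert]
    exact hq _ (insert_subset hH hSF) (by rw [card_insert_of_notMem hHS]; exact hk)
  have hle := hmin _ (mem_filter.2 ⟨mem_powerset.2 hbad.1, hbad⟩)
  rw [Prod.Lex.le_iff, card_insert_of_notMem hHS, hinsert] at hle
  simp only [ofLex_toLex] at hle
  refine (padicValNat_dvd_iff_le fun h0 => hdvd (by rw [h0]; exact dvd_zero _)).2 ?_
  omega

-- The pairs `(A, X)` recorded by the greedy procedure, in the order they are chosen.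
def IsPadicChain (p : ℕ) (F : Finset (Finset α)) (l : List (Finset α × Finset α)) : Prop :=
  (∀ r ∈ l, r.2 ∈ F ∧ r.1 ⊆ r.2 ∧ #r.1 ≠ 0 ∧ ∀ H ∈ F, p ^ padicValNat p #r.1 ∣ #(r.1 ∩ H)) ∧
    l.Pairwise fun r s => p ^ (padicValNat p #r.1 + 1) ∣ #(r.1 ∩ s.2)

theorem exists_isPadicChain_and_subset_without_bad_subfamily
    (hq : ∀ S ⊆ F, #S = k → p ^ a ∣ #(S.inf id)) (L : Finset (Finset α)) :
    ∃ l, IsPadicChain p F l ∧ (∀ r ∈ l, r.2 ∈ L) ∧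
      ∃ L' ⊆ L, #L ≤ #L' + (k - 1) * l.length ∧ ∀ S, ¬ IsBadSubfamily p a k F L' S := by
  induction L using Finset.strongInduction with
  | H L ih =>
  by_cases h : ∃ S, IsBadSubfamily p a k F L S
  swap
  · exact ⟨[], ⟨by simp, .nil⟩, by simp, L, subset_rfl, by simp, not_exists.1 h⟩
  obtain ⟨S, ⟨hSF, hSL, hSk, hndvd⟩, hstep⟩ := exists_isBadSubfamily_pow_succ_dvd_card_inter hq h
  obtain ⟨X, hX⟩ := hSL
  rw [mem_inter] at hX
  have hssub : L \ S ⊂ L :=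
    (ssubset_iff_of_subset sdiff_subset).2 ⟨X, hX.2, fun h => (mem_sdiff.1 h).2 hX.1⟩
  obtain ⟨l, ⟨hl, hpair⟩, hlL, L', hL'sub, hcard, hL'⟩ := ih (L \ S) hssub
  refine ⟨(S.inf id, X) :: l, ⟨?_, ?_⟩, ?_, L', hL'sub.trans sdiff_subset, ?_, hL'⟩
  · refine List.forall_mem_cons.2 ⟨⟨hSF hX.1, inf_le (f := id) hX.1, ?_, fun H hH => ?_⟩, hl⟩
    · exact fun h0 => hndvd (by rw [h0]; exact dvd_zero _)
    by_cases hHS : H ∈ S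
    · have hAH : S.inf id ⊆ H := inf_le (f := id) hHS
      simpa only [inter_eq_left.2 hAH] using pow_padicValNat_dvd
    · exact (pow_dvd_pow p (Nat.le_succ _)).trans (hstep H hH hHS)
  · exact List.pairwise_cons.2
      ⟨fun s hs => hstep s.2 (hl s hs).1 (mem_sdiff.1 (hlL s hs)).2, hpair⟩
  · exact List.forall_mem_cons.2 ⟨hX.2, fun r hr => (mem_sdiff.1 (hlL r hr)).1⟩
  · have := card_le_card_sdiff_add_card (s := L) (t := S)
    rw [List.length_cons, mul_add_one]
    omega

theorem IsPadicChain.length_le {l : List (Finset α × Finset α)} (hl : IsPadicChain p F l) :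
    l.length ≤ Fintype.card α := by
  obtain ⟨hmem, hpair⟩ := hl
  simpa using Fintype.card_le_of_pow_dvd_card_inter_triangular Fact.out
    (fun i => (l.get i).1) (fun i => (l.get i).2) (fun i => padicValNat p #(l.get i).1)
    (fun i j => (hmem _ (l.get_mem i)).2.2.2 _ (hmem _ (l.get_mem j)).1)
    (List.pairwise_iff_get.1 hpair)
    (fun i => by
      obtain ⟨-, hsub, hne, -⟩ := hmem _ (l.get_mem i)
      simpa only [inter_eq_left.2 hsub] using pow_succ_padicValNat_not_dvd hne)

theorem exists_large_subfamily_pow_dvd_card_inf (hq : ∀ S ⊆ F, #S = k → p ^ a ∣ #(S.inf id)) :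
    ∃ L ⊆ F, #(F \ L) ≤ (k - 1) * Fintype.card α ∧
      ∀ S ⊆ L, S.Nonempty → #S ≤ k → p ^ a ∣ #(S.inf id) := by
  obtain ⟨l, hl, -, L, hLF, hcard, hL⟩ := exists_isPadicChain_and_subset_without_bad_subfamily hq F
  refine ⟨L, hLF, ?_, fun S hSL hS hSk => ?_⟩
  · have := Nat.mul_le_mul_left (k - 1) hl.length_le
    rw [card_sdiff_of_subset hLF]
    omega
  rcases hSk.eq_or_lt with hSk | hSk
  · exact hq S (hSL.trans hLF) hSk
  by_contra hndvd
  exact hL S ⟨hSL.trans hLF, by rwa [inter_eq_left.2 hSL], hSk, hndvd⟩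

end Greedy

theorem Nat.dvd_of_forall_ordProj_dvd {ℓ m : ℕ} (hℓ : ℓ ≠ 0)
    (h : ∀ p ∈ ℓ.primeFactors, p ^ ℓ.factorization p ∣ m) : ℓ ∣ m := by
  refine (Nat.dvd_iff_prime_pow_dvd_dvd m ℓ).2 fun p j hp hj =>
    ((hp.pow_dvd_iff_dvd_ordProj hℓ).1 hj).trans ?_
  by_cases hpℓ : p ∈ ℓ.primeFactors
  · exact h p hpℓ
  · rw [← Nat.support_factorization, Finsupp.notMem_support_iff] at hpℓ
    simp [hpℓ]

theorem Finset.card_sub_mul_le_card_filter_forall_mem {ι β : Type*} [DecidableEq β]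
    (s : Finset ι) (F : Finset β) (L : ι → Finset β) {m : ℕ} (h : ∀ i ∈ s, #(F \ L i) ≤ m) :
    #F - #s * m ≤ #(F.filter fun x => ∀ i ∈ s, x ∈ L i) := by
  have hsub : F \ F.filter (fun x => ∀ i ∈ s, x ∈ L i) ⊆ s.biUnion fun i => F \ L i := by
    intro x hx
    simp only [mem_sdiff, mem_filter, not_and, not_forall] at hx
    obtain ⟨i, hi, hxi⟩ := hx.2 hx.1
    exact mem_biUnion.2 ⟨i, hi, mem_sdiff.2 ⟨hx.1, hxi⟩⟩
  have := (card_le_card hsub).trans (card_biUnion_le.trans (sum_le_card_nsmul s _ m h))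
  have := card_le_card_sdiff_add_card (s := F) (t := F.filter fun x => ∀ i ∈ s, x ∈ L i)
  rw [smul_eq_mul] at *
  omega

theorem Finset.exists_injective_image_univ_eq {β : Type*} [DecidableEq β] (S : Finset β) :
    ∃ f : Fin #S → β, Function.Injective f ∧ univ.image f = S :=
  ⟨fun j => S.equivFin.symm j, Subtype.val_injective.comp S.equivFin.symm.injective, by
    ext x
    simp only [mem_image, mem_univ, true_and]
    exact ⟨fun ⟨j, hj⟩ => hj ▸ (S.equivFin.symm j).2, fun hx => ⟨S.equivFin ⟨x, hx⟩, by simp⟩⟩⟩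

theorem weakly_closed_to_closed_general {ℓ k n : ℕ} (hℓ : 1 ≤ ℓ)
    (F : Finset (Finset (Fin n)))
    (hweak : ∀ f : Fin k → Finset (Fin n), (∀ j, f j ∈ F) → Function.Injective f →
      ℓ ∣ (Finset.univ.inf f).card) :
    ∃ F' ⊆ F, F.card - ℓ.primeFactors.card * k ^ 2 * n ≤ F'.card ∧
      (∀ i : ℕ, 1 ≤ i → i ≤ k → ∀ f : Fin i → Finset (Fin n), (∀ j, f j ∈ F') →
        ℓ ∣ (Finset.univ.inf f).card) := by
  have hset : ∀ S ⊆ F, #S = k → ℓ ∣ #(S.inf id) := by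
    rintro S hSF rfl
    obtain ⟨f, hf, hfS⟩ := S.exists_injective_image_univ_eq
    have := hweak f (fun j => hSF (hfS ▸ mem_image_of_mem f (mem_univ j))) hf
    rwa [← hfS, inf_image]
  choose! L _ hcard hdvd using fun p (hp : p ∈ ℓ.primeFactors) =>
    have := Fact.mk (Nat.prime_of_mem_primeFactors hp)
    exists_large_subfamily_pow_dvd_card_inf fun S hSF hS =>
      (Nat.ordProj_dvd ℓ p).trans (hset S hSF hS)
  refine ⟨F.filter fun H => ∀ p ∈ ℓ.primeFactors, H ∈ L p, filter_subset _ _, ?_, ?_⟩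
  · refine le_trans (Nat.sub_le_sub_left ?_ _) (card_sub_mul_le_card_filter_forall_mem _ F L hcard)
    rw [Fintype.card_fin, mul_assoc]
    gcongr
    exact (Nat.sub_le k 1).trans (Nat.le_self_pow two_ne_zero k)
  · intro i hi hik f hf
    rw [show univ.inf f = (univ.image f).inf id by rw [inf_image]; rfl]
    refine Nat.dvd_of_forall_ordProj_dvd (by omega) fun p hp => hdvd p hp _ ?_ ?_ ?_
    · exact image_subset_iff.2 fun j _ => (mem_filter.1 (hf j)).2 p hp
    · exact (univ_nonempty_iff.2 ⟨⟨0, hi⟩⟩).image f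
    · exact card_image_le.trans (by simpa using hik)

/-- A weakly `k`-closed family can be made `k`-closed by removing at most `s·k²·n` sets,
where `s` is the number of distinct prime divisors of `ℓ`. -/
theorem weakly_closed_to_closed {ℓ k n : ℕ} (hℓ : 1 ≤ ℓ) (hk : 1 ≤ k)
    (F : Finset (Finset (Fin n)))
    (hweak : ∀ f : Fin k → Finset (Fin n), (∀ j, f j ∈ F) → Function.Injective f →
      ℓ ∣ (Finset.univ.inf f).card) :
    ∃ F' ⊆ F, F.card - ℓ.primeFactors.card * k ^ 2 * n ≤ F'.card ∧
      (∀ i : ℕ, 1 ≤ i → i ≤ k → ∀ f : Fin i → Finset (Fin n), (∀ j, f j ∈ F') →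
        ℓ ∣ (Finset.univ.inf f).card) :=
  weakly_closed_to_closed_general hℓ F hweak
end

section
/- Let \ell, k \geq 2 and let \mathcal{F}_1,...,\mathcal{F}_k \subset 2^{[n]} be families such that \ell divides |F_1 \cap ... \cap F_k| for every choice F_1 \in \mathcal{F}_1, ..., F_k \in \mathcal{F}_k. Then |\mathcal{F}_1| \cdots |\mathcal{F}_k| \leq 2^{(k-1)n}. -/
/-!
Fix a prime `p ∣ ℓ` and let `Vᵢ ⊆ 𝔽ₚⁿ` be the span of the indicator vectors of the sets in `𝓕ᵢ`.
A subspace of dimension `d` contains at most `2 ^ d` vectors with `0/1` entries, so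
`|𝓕ᵢ| ≤ 2 ^ dim Vᵢ`. The coordinatewise product satisfies
`dim (U * V) ≥ dim U + dim V - n`, hence `W = V₂ ⋯ V_k` has dimension at least
`∑_{i ≥ 2} dim Vᵢ - (k - 2) n`. The divisibility hypothesis says exactly that `W` is orthogonal to
`V₁` for the standard dot product, so `dim W + dim V₁ ≤ n`, and together
`∑ᵢ dim Vᵢ ≤ (k - 1) n`.
-/

open Finset Module Submodule

section Restrict

variable {K ι : Type*} [Field K]

def restrictAlgHom (K : Type*) [Field K] (S : Finset ι) : (ι → K) →ₐ[K] (S → K) :=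
  AlgHom.pi fun i => Pi.evalAlgHom K (fun _ : ι => K) i

@[simp]
lemma restrictAlgHom_apply (S : Finset ι) (u : ι → K) (i : S) : restrictAlgHom K S u i = u i :=
  rfl

lemma map_restrictAlgHom_eq_top_of_subset {U : Submodule K (ι → K)} {P S : Finset ι}
    (hP : Function.Surjective ((restrictAlgHom K P).toLinearMap ∘ₗ U.subtype)) (hS : S ⊆ P) :
    U.map (restrictAlgHom K S).toLinearMap = ⊤ := by
  classical
  refine eq_top_iff.mpr fun w _ => ?_
  obtain ⟨u, hu⟩ := hP fun p => if h : (p : ι) ∈ S then w ⟨p, h⟩ else 0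
  refine ⟨u, u.2, funext fun s => ?_⟩
  simpa [hS s.2] using congrFun hu ⟨s, hS s.2⟩

end Restrict

section FiniteCoordinates

variable {K ι : Type*} [Field K] [Fintype ι]

/-- The coordinate functionals span `Dual K U`; `P` indexes a basis of it chosen among them. -/
theorem exists_finset_card_eq_finrank_bijective (U : Submodule K (ι → K)) :
    ∃ P : Finset ι, #P = finrank K U ∧
      Function.Bijective ((restrictAlgHom K P).toLinearMap ∘ₗ U.subtype) := by
  let ev : ι → Dual K U := fun x => LinearMap.proj x ∘ₗ U.subtype
  have hspan : span K (Set.range ev) = ⊤ := span_eq_top_of_ne_zero fun u hu => by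
    obtain ⟨x, hx⟩ := Function.ne_iff.mp (Submodule.coe_eq_zero.not.mpr hu)
    exact ⟨ev x, ⟨x, rfl⟩, hx⟩
  obtain ⟨κ, a, ha, hspan', hli⟩ := exists_linearIndependent' K ev
  rw [hspan] at hspan'
  have : Finite κ := .of_injective a ha
  have : Fintype κ := .ofFinite κ
  have hcard : Fintype.card κ = finrank K U := by
    rw [← Subspace.dual_finrank_eq, finrank_eq_card_basis (Basis.mk hli hspan'.ge)]
  let P := univ.map ⟨a, ha⟩
  have hPcard : #P = finrank K U := by simp [P, hcard]
  have hinj : Function.Injective ((restrictAlgHom K P).toLinearMap ∘ₗ U.subtype) := by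
    rw [← LinearMap.ker_eq_bot, eq_bot_iff]
    intro u hu
    have hvanish : span K (Set.range (ev ∘ a)) ≤ LinearMap.ker (Dual.eval K U u) := by
      rw [span_le]
      rintro - ⟨j, rfl⟩
      simpa [ev, P] using congrFun hu ⟨a j, by simp [P]⟩
    rw [hspan'] at hvanish
    exact (forall_dual_apply_eq_zero_iff K u).mp fun φ => hvanish (mem_top (x := φ))
  refine ⟨P, hPcard, hinj, ?_⟩
  rwa [← LinearMap.injective_iff_surjective_of_finrank_eq_finrank]
  simp [hPcard]

theorem card_le_two_pow_finrank {U : Submodule K (ι → K)} {𝓕 : Finset (Finset ι)}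
    (h𝓕 : ∀ s ∈ 𝓕, (s : Set ι).indicator 1 ∈ U) : #𝓕 ≤ 2 ^ finrank K U := by
  classical
  obtain ⟨P, hP, hinj, -⟩ := exists_finset_card_eq_finrank_bijective U
  have hinjOn : Set.InjOn (· ∩ P) 𝓕 := by
    intro s hs t ht hst
    have hagree : ∀ p ∈ P, (p ∈ s ↔ p ∈ t) := fun p hp => by
      simpa [hp] using congrArg (p ∈ ·) hst
    have := @hinj ⟨_, h𝓕 s hs⟩ ⟨_, h𝓕 t ht⟩ (funext fun p => by
      simp [Set.indicator_apply, hagree p p.2])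
    exact coe_injective (Set.indicator_one_inj K (Subtype.ext_iff.mp this))
  calc #𝓕 ≤ #P.powerset := card_le_card_of_injOn (· ∩ P) (fun s _ => by simp) hinjOn
    _ = 2 ^ finrank K U := by rw [card_powerset, hP]

theorem finrank_add_finrank_le_card_add_finrank_mul (U V : Submodule K (ι → K)) :
    finrank K U + finrank K V ≤ Fintype.card ι + finrank K ↥(U * V) := by
  classical
  obtain ⟨P, hP, -, hUP⟩ := exists_finset_card_eq_finrank_bijective U
  obtain ⟨Q, hQ, -, hVQ⟩ := exists_finset_card_eq_finrank_bijective V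
  -- restriction is multiplicative, and both `U` and `V` restrict onto all of `K ^ (P ∩ Q)`
  have hmap : (U * V).map (restrictAlgHom K (P ∩ Q)).toLinearMap = ⊤ := by
    rw [Submodule.map_mul, map_restrictAlgHom_eq_top_of_subset hUP inter_subset_left,
      map_restrictAlgHom_eq_top_of_subset hVQ inter_subset_right]
    exact top_le_iff.mp fun x _ => by
      simpa using Submodule.mul_mem_mul (mem_top (x := x)) (mem_top (x := 1))
  have hPQ : #(P ∩ Q) ≤ finrank K ↥(U * V) := by
    have := finrank_map_le (restrictAlgHom K (P ∩ Q)).toLinearMap (U * V)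
    rwa [hmap, finrank_top, finrank_fintype_fun_eq_card, Fintype.card_coe] at this
  have := card_inter_add_card_union P Q
  have := card_le_univ (P ∪ Q)
  omega

theorem sum_finrank_add_card_le_finrank_prod_add {κ : Type*} (V : κ → Submodule K (ι → K))
    {s : Finset κ} (hs : s.Nonempty) :
    ∑ i ∈ s, finrank K (V i) + Fintype.card ι ≤
      finrank K ↥(∏ i ∈ s, V i) + #s * Fintype.card ι := by
  induction hs using Finset.Nonempty.cons_induction with
  | singleton a => rw [prod_singleton, sum_singleton, card_singleton, one_mul]
  | cons a s ha hs ih =>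
    rw [prod_cons, sum_cons, card_cons, add_one_mul]
    have := finrank_add_finrank_le_card_add_finrank_mul (V a) (∏ i ∈ s, V i)
    omega

section DotProduct

variable [DecidableEq ι]

theorem finrank_add_finrank_le_card_of_dotProduct_eq_zero
    {U V : Submodule K (ι → K)} (h : ∀ u ∈ U, ∀ v ∈ V, u ⬝ᵥ v = 0) :
    finrank K U + finrank K V ≤ Fintype.card ι := by
  have hV : V.map (dotProductEquiv K ι).toLinearMap ≤ U.dualAnnihilator := by
    rintro - ⟨v, hv, rfl⟩
    exact (mem_dualAnnihilator _).mpr fun u hu => by simpa [dotProduct_comm] using h u hu v hv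
  have := Subspace.finrank_add_finrank_dualAnnihilator_eq U
  have := Submodule.finrank_mono hV
  rw [LinearEquiv.finrank_map_eq] at this
  simp only [finrank_fintype_fun_eq_card] at *
  omega

theorem sum_finrank_le_of_dotProduct_eq_zero {κ : Type*} [Fintype κ] [DecidableEq κ]
    [Nontrivial κ] (V : κ → Submodule K (ι → K)) (i₀ : κ)
    (h : ∀ u ∈ ∏ i ∈ univ.erase i₀, V i, ∀ v ∈ V i₀, u ⬝ᵥ v = 0) :
    ∑ i, finrank K (V i) ≤ (Fintype.card κ - 1) * Fintype.card ι := by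
  obtain ⟨j, hj⟩ := exists_ne i₀
  have hchain := sum_finrank_add_card_le_finrank_prod_add V ⟨j, mem_erase.mpr ⟨hj, mem_univ j⟩⟩
  have horth := finrank_add_finrank_le_card_of_dotProduct_eq_zero h
  rw [card_erase_of_mem (mem_univ _), card_univ] at hchain
  rw [← sum_erase_add _ _ (mem_univ i₀)]
  linarith

lemma dotProduct_eq_zero_of_mem_span {A B : Set (ι → K)} (h : ∀ a ∈ A, ∀ b ∈ B, a ⬝ᵥ b = 0)
    {u v : ι → K} (hu : u ∈ span K A) (hv : v ∈ span K B) : u ⬝ᵥ v = 0 := by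
  have hA : span K A ≤ (span K B).dualAnnihilator.comap (dotProductEquiv K ι).toLinearMap := by
    refine span_le.mpr fun a ha => (mem_dualAnnihilator _).mpr fun w hw => ?_
    have : span K B ≤ LinearMap.ker (dotProductEquiv K ι a) :=
      span_le.mpr fun b hb => by simpa using h a ha b hb
    simpa using this hw
  simpa using (mem_dualAnnihilator _).mp (hA hu) v hv

lemma prod_indicator_one {κ : Type*} (s : Finset κ) (f : κ → Finset ι) :
    ∏ i ∈ s, (f i : Set ι).indicator (1 : ι → K) = ((s.inf f : Finset ι) : Set ι).indicator 1 := by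
  ext x
  simp [prod_apply, Set.indicator_apply, prod_boole, Finset.mem_inf]

lemma sum_indicator_one_apply (s : Finset ι) : ∑ x, (s : Set ι).indicator (1 : ι → K) x = #s := by
  simp [Set.indicator_apply]

def indicatorSpan (K : Type*) [Field K] (𝓕 : Finset (Finset ι)) : Submodule K (ι → K) :=
  span K ((fun s : Finset ι => (s : Set ι).indicator 1) '' 𝓕)

theorem dotProduct_eq_zero_of_forall_dvd_card_inf (p : ℕ) [CharP K p] {κ : Type*} [Fintype κ]
    [DecidableEq κ] (F : κ → Finset (Finset ι)) (i₀ : κ)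
    (h : ∀ f : κ → Finset ι, (∀ i, f i ∈ F i) → p ∣ #(univ.inf f)) :
    ∀ u ∈ ∏ i ∈ univ.erase i₀, indicatorSpan K (F i), ∀ v ∈ indicatorSpan K (F i₀),
      u ⬝ᵥ v = 0 := by
  intro u hu v hv
  simp only [indicatorSpan, prod_span] at hu
  refine dotProduct_eq_zero_of_mem_span (fun a ha b hb => ?_) hu hv
  obtain ⟨g, hg, rfl⟩ := (Set.mem_finsetProd _ _ _).mp ha
  obtain ⟨B, hB, rfl⟩ := hb
  choose! f hf hfg using fun i (hi : i ∈ univ.erase i₀) => hg hi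
  set f' := Function.update f i₀ B
  have hf' : ∀ i, f' i ∈ F i := fun i => by
    by_cases hi : i = i₀
    · subst hi; simpa [f'] using hB
    · simpa [f', hi] using hf i (mem_erase.mpr ⟨hi, mem_univ i⟩)
  have hg' : ∏ i ∈ univ.erase i₀, g i = ∏ i ∈ univ.erase i₀, (f' i : Set ι).indicator 1 :=
    prod_congr rfl fun i hi => by simp [f', ne_of_mem_erase hi, ← hfg i hi]
  calc (∏ i ∈ univ.erase i₀, g i) ⬝ᵥ (B : Set ι).indicator 1
      = ∑ x, (∏ i, (f' i : Set ι).indicator (1 : ι → K)) x := by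
        rw [hg', ← prod_erase_mul _ _ (mem_univ i₀)]
        simp [dotProduct, f']
    _ = 0 := by
      rw [prod_indicator_one, sum_indicator_one_apply]
      exact (CharP.cast_eq_zero_iff K p _).mpr (h f' hf')

end DotProduct

end FiniteCoordinates

/-- Cross version: if `ℓ ∣ |F₁ ∩ ⋯ ∩ F_k|` for all choices `Fᵢ ∈ 𝓕ᵢ`, then
`|𝓕₁| ⋯ |𝓕_k| ≤ 2 ^ ((k-1)n)`. -/
theorem cross_intersections {ℓ k n : ℕ} (hℓ : 2 ≤ ℓ) (hk : 2 ≤ k)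
    (F : Fin k → Finset (Finset (Fin n)))
    (h : ∀ f : (i : Fin k) → Finset (Fin n), (∀ i, f i ∈ F i) →
      ℓ ∣ (Finset.univ.inf f).card) :
    ∏ i, (F i).card ≤ 2 ^ ((k - 1) * n) := by
  obtain ⟨p, hp, hpℓ⟩ := Nat.exists_prime_and_dvd (show ℓ ≠ 1 by omega)
  have := Fact.mk hp
  have : Nontrivial (Fin k) := Fin.nontrivial_iff_two_le.mpr hk
  let V i := indicatorSpan (ZMod p) (F i)
  have hrank : ∑ i, finrank (ZMod p) (V i) ≤ (k - 1) * n := by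
    simpa using sum_finrank_le_of_dotProduct_eq_zero V ⟨0, by omega⟩
      (dotProduct_eq_zero_of_forall_dvd_card_inf p F _ fun f hf => hpℓ.trans (h f hf))
  calc ∏ i, #(F i) ≤ ∏ i, 2 ^ finrank (ZMod p) (V i) :=
        prod_le_prod' fun i _ => card_le_two_pow_finrank fun s hs => subset_span ⟨s, hs, rfl⟩
    _ = 2 ^ ∑ i, finrank (ZMod p) (V i) := prod_pow_eq_pow_sum _ _ _
    _ ≤ 2 ^ ((k - 1) * n) := Nat.pow_le_pow_right two_pos hrank
end

section
/- Let p be a prime and k \geq 2. Let V_1,...,V_k be subspaces of \mathbb{F}_p^n such that for all v_1 \in V_1, ..., v_k \in V_k, the sum of coordinates of the coordinate-wise product v_1 \cdot v_2 \cdots v_k is zero. Then dim(V_1) + ... + dim(V_k) \leq (k-1)n. -/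
/-!
Induction on `n`, over an arbitrary field. If the last unit vector `e` lay in every `Vᵢ`, the
family `(e, …, e)` would have coordinate sum `1`, so some `V_{i₀}` misses `e`. Keep `V_{i₀}` and cut
every other `Vᵢ` down to the hyperplane where the last coordinate vanishes, losing at most one
dimension each. Dropping the last coordinate is injective on all these subspaces (its kernel is
spanned by `e`), and since `k ≥ 2` some factor of the last coordinate's product vanishes, so the
images satisfy the hypothesis one dimension lower.
-/

open Finset Module LinearMap

variable {K : Type*} [Field K]

section Finrank

variable {M N : Type*} [AddCommGroup M] [Module K M] [AddCommGroup N] [Module K N]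
  [FiniteDimensional K M]

theorem Submodule.finrank_map_add_finrank_inf_ker (f : M →ₗ[K] N) (S : Submodule K M) :
    finrank K (S.map f) + finrank K ↥(S ⊓ ker f) = finrank K S := by
  rw [← range_domRestrict, ← finrank_range_add_finrank_ker (f.domRestrict S), ker_domRestrict,
    ← Submodule.finrank_map_subtype_eq, Submodule.map_comap_subtype, inf_comm]

theorem Submodule.finrank_map_eq_of_disjoint_ker {f : M →ₗ[K] N} {S : Submodule K M}
    (h : Disjoint S (ker f)) : finrank K (S.map f) = finrank K S := by
  have := S.finrank_map_add_finrank_inf_ker f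
  rwa [h.eq_bot, finrank_bot, add_zero] at this

theorem Submodule.finrank_le_finrank_inf_ker_add_one (ℓ : M →ₗ[K] K) (S : Submodule K M) :
    finrank K S ≤ finrank K ↥(S ⊓ ker ℓ) + 1 := by
  have := Submodule.finrank_le (S.map ℓ)
  rw [finrank_self] at this
  have := S.finrank_map_add_finrank_inf_ker ℓ
  omega

end Finrank

theorem Fintype.sum_le_sum_add_card_sub_one {ι : Type*} [Fintype ι] [DecidableEq ι]
    {f g : ι → ℕ} (i₀ : ι) (h₀ : f i₀ ≤ g i₀) (h : ∀ i ≠ i₀, f i ≤ g i + 1) :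
    ∑ i, f i ≤ ∑ i, g i + (Fintype.card ι - 1) := by
  rw [← add_sum_erase _ _ (mem_univ i₀), ← add_sum_erase _ g (mem_univ i₀),
    ← card_univ, ← card_erase_of_mem (mem_univ i₀), Finset.card_eq_sum_ones, add_assoc,
    ← sum_add_distrib]
  gcongr with i hi
  exact h i (ne_of_mem_erase hi)

variable (K) in
def initLinearMap (n : ℕ) : (Fin (n + 1) → K) →ₗ[K] (Fin n → K) :=
  funLeft K K Fin.castSucc

@[simp]
theorem initLinearMap_apply {n : ℕ} (x : Fin (n + 1) → K) : initLinearMap K n x = Fin.init x :=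
  rfl

theorem eq_single_last_of_init_eq_zero {n : ℕ} {x : Fin (n + 1) → K} (hx : Fin.init x = 0) :
    x = x (Fin.last n) • Pi.single (Fin.last n) 1 := by
  ext y
  induction y using Fin.lastCases with
  | last => simp
  | cast j => simpa [Fin.init, Pi.single_apply, (Fin.castSucc_lt_last j).ne] using congrFun hx j

theorem disjoint_ker_initLinearMap {n : ℕ} {S : Submodule K (Fin (n + 1) → K)}
    (h : Pi.single (Fin.last n) 1 ∉ S) : Disjoint S (ker (initLinearMap K n)) := by
  refine Submodule.disjoint_def.mpr fun x hxS hx ↦ ?_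
  have hx := eq_single_last_of_init_eq_zero (by simpa using hx)
  generalize x (Fin.last n) = a at hx
  subst hx
  by_contra hne
  exact h ((S.smul_mem_iff (left_ne_zero_of_smul hne)).mp hxS)

def ProductOrthogonal {ι α : Type*} [Fintype ι] [Fintype α] (V : ι → Submodule K (α → K)) :
    Prop :=
  ∀ v : ι → α → K, (∀ i, v i ∈ V i) → ∑ x, ∏ i, v i x = 0

namespace ProductOrthogonal

variable {ι α : Type*} [Fintype ι] [Fintype α] {V : ι → Submodule K (α → K)}

theorem mono {W : ι → Submodule K (α → K)} (h : ProductOrthogonal V) (hWV : ∀ i, W i ≤ V i) :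
    ProductOrthogonal W :=
  fun v hv ↦ h v fun i ↦ hWV i (hv i)

theorem exists_single_notMem [Nonempty ι] [DecidableEq α] (h : ProductOrthogonal V) (a : α) :
    ∃ i, Pi.single a 1 ∉ V i := by
  by_contra! hmem
  have := h (fun _ ↦ Pi.single a 1) hmem
  simp [Pi.single_apply, Fintype.card_ne_zero] at this

theorem map_initLinearMap {n : ℕ} {V : ι → Submodule K (Fin (n + 1) → K)}
    (h : ProductOrthogonal V) {j : ι} (hj : ∀ v ∈ V j, v (Fin.last n) = 0) :
    ProductOrthogonal fun i ↦ (V i).map (initLinearMap K n) := by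
  intro w hw
  choose v hvV hvw using hw
  have hlast : ∏ i, v i (Fin.last n) = 0 := prod_eq_zero (mem_univ j) (hj _ (hvV j))
  have := h v hvV
  rw [Fin.sum_univ_castSucc, hlast, add_zero] at this
  simpa [← hvw, Fin.init] using this

theorem sum_finrank_le [Nontrivial ι] [DecidableEq ι] {n : ℕ}
    {V : ι → Submodule K (Fin n → K)} (h : ProductOrthogonal V) :
    ∑ i, finrank K (V i) ≤ (Fintype.card ι - 1) * n := by
  induction n with
  | zero => simp [Submodule.eq_bot_of_subsingleton]
  | succ n ih =>
    obtain ⟨i₀, hi₀⟩ := h.exists_single_notMem (Fin.last n)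
    let S i : Submodule K (Fin (n + 1) → K) :=
      if i = i₀ then V i else V i ⊓ ker (proj (Fin.last n))
    have hS₀ : S i₀ = V i₀ := if_pos rfl
    have hS_ne {i} (hi : i ≠ i₀) : S i = V i ⊓ ker (proj (Fin.last n)) := if_neg hi
    have hS_le i : S i ≤ V i := by
      by_cases hi : i = i₀
      · rw [hi, hS₀]
      · simp [hS_ne hi]
    have hS_single i : Pi.single (Fin.last n) 1 ∉ S i := by
      by_cases hi : i = i₀
      · rwa [hi, hS₀]
      · simp [hS_ne hi]
    obtain ⟨j, hj⟩ := exists_ne i₀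
    have hSj : ∀ v ∈ S j, v (Fin.last n) = 0 := by
      simp +contextual [hS_ne hj]
    have hfinrank i : finrank K ((S i).map (initLinearMap K n)) = finrank K (S i) :=
      Submodule.finrank_map_eq_of_disjoint_ker (disjoint_ker_initLinearMap (hS_single i))
    calc ∑ i, finrank K (V i)
        ≤ ∑ i, finrank K (S i) + (Fintype.card ι - 1) := by
          refine Fintype.sum_le_sum_add_card_sub_one i₀ ?_ fun i hi ↦ ?_
          · rw [hS₀]
          · rw [hS_ne hi]
            exact (V i).finrank_le_finrank_inf_ker_add_one _
      _ ≤ (Fintype.card ι - 1) * n + (Fintype.card ι - 1) := by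
          have := ih ((h.mono hS_le).map_initLinearMap hSj)
          simp only [hfinrank] at this
          omega
      _ = (Fintype.card ι - 1) * (n + 1) := by ring

end ProductOrthogonal

theorem cross_subspaces_general {p k n : ℕ} [Fact p.Prime] (hk : 2 ≤ k)
    (V : Fin k → Submodule (ZMod p) (Fin n → ZMod p))
    (h : ∀ v : (i : Fin k) → (Fin n → ZMod p), (∀ i, v i ∈ V i) →
      ∑ x, ∏ i, v i x = 0) :
    ∑ i, Module.finrank (ZMod p) (V i) ≤ (k - 1) * n := by
  have : Nontrivial (Fin k) := Fin.nontrivial_iff_two_le.mpr hk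
  simpa using ProductOrthogonal.sum_finrank_le h

/-- If the coordinate-wise product of any `k` vectors `vᵢ ∈ Vᵢ` has zero coordinate sum,
then `∑ dim Vᵢ ≤ (k-1)n`. -/
theorem cross_subspaces {p k n : ℕ} (hp : p.Prime) [Fact p.Prime] (hk : 2 ≤ k)
    (V : Fin k → Submodule (ZMod p) (Fin n → ZMod p))
    (h : ∀ v : (i : Fin k) → (Fin n → ZMod p), (∀ i, v i ∈ V i) →
      ∑ x, ∏ i, v i x = 0) :
    ∑ i, Module.finrank (ZMod p) (V i) ≤ (k - 1) * n :=
  cross_subspaces_general hk V h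
end

section
/- Let \ell be a positive integer and suppose the intersection of any (finite) number of sets in a family \mathcal{F} \subset 2^{[n]} has size divisible by \ell (equivalently, \mathcal{F} is n-closed over \mathbb{Z}_\ell). Then |\mathcal{F}| \leq 2^{\lfloor n/\ell \rfloor}. -/
/-!
Close the family under intersection, which keeps all sizes divisible by `ℓ`. In an
intersection-closed family `L` of subsets of `V` with at least two members, let `M` be its least
member and `A` a member of least size other than `M`; then `ℓ ≤ |A \ M|`. The members containing
`A` correspond, via `S ↦ S \ A`, to such a family in `V \ A`, and the others meet `A` exactly in
`M` by minimality of `A`, so they live in `V \ (A \ M)`. Both ground sets have lost at least `ℓ`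
points, so induction on `|V|` gives `|L| ≤ 2 · 2 ^ ((|V| - ℓ) / ℓ) ≤ 2 ^ (|V| / ℓ)`.
-/

open Finset

lemma Finset.inf'_id_eq_univ_inf_equivFin {β : Type*} [SemilatticeInf β] [OrderTop β]
    (t : Finset β) (ht : t.Nonempty) :
    t.inf' ht id = univ.inf fun j : Fin #t ↦ (t.equivFin.symm j : β) := by
  rw [inf'_eq_inf, ← inf_attach, ← univ_eq_attach, ← univ_map_equiv_to_embedding t.equivFin.symm,
    inf_map]
  rfl

section

variable {α : Type*} [DecidableEq α] {ℓ : ℕ}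

lemma pos_and_le_card_sdiff_of_ssubset {s t : Finset α} (h : s ⊂ t) (hs : ℓ ∣ #s) (ht : ℓ ∣ #t) :
    0 < ℓ ∧ ℓ ≤ #(t \ s) := by
  have hd : ℓ ∣ #(t \ s) := card_sdiff_of_subset h.1 ▸ Nat.dvd_sub ht hs
  have hpos : 0 < #(t \ s) := card_pos.2 (sdiff_nonempty.2 h.2)
  exact ⟨Nat.pos_of_dvd_of_pos hd hpos, Nat.le_of_dvd hpos hd⟩

lemma two_mul_two_pow_card_sdiff_div_le {B V : Finset α} (hBV : B ⊆ V) (hℓ : 0 < ℓ)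
    (hB : ℓ ≤ #B) : 2 * 2 ^ (#(V \ B) / ℓ) ≤ 2 ^ (#V / ℓ) := by
  have hcard : #(V \ B) + ℓ ≤ #V := by
    have := card_le_card hBV
    rw [card_sdiff_of_subset hBV]; omega
  rw [← pow_succ', ← Nat.add_div_right _ hℓ]
  exact Nat.pow_le_pow_right two_pos (Nat.div_le_div_right hcard)

variable {L : Finset (Finset α)}

lemma InfClosed.image_sdiff_filter_superset (hL : InfClosed (L : Set (Finset α))) (A : Finset α) :
    InfClosed (({S ∈ L | A ⊆ S}.image (· \ A) : Finset (Finset α)) : Set (Finset α)) := by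
  simp only [InfClosed, coe_image, coe_filter, Set.mem_image, Set.mem_ofPred_eq]
  rintro _ ⟨S, ⟨hS, hAS⟩, rfl⟩ _ ⟨T, ⟨hT, hAT⟩, rfl⟩
  exact ⟨S ⊓ T, ⟨hL hS hT, le_inf hAS hAT⟩, inf_sdiff⟩

lemma card_image_sdiff_filter_superset (A : Finset α) :
    #({S ∈ L | A ⊆ S}.image (· \ A)) = #{S ∈ L | A ⊆ S} := by
  refine card_image_of_injOn fun S hS T hT hST ↦ ?_
  simp only [coe_filter, Set.mem_ofPred_eq] at hS hT
  rw [← sdiff_union_of_subset hS.2, ← sdiff_union_of_subset hT.2]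
  exact congrArg (· ∪ A) hST

lemma InfClosed.filter_not_superset (hL : InfClosed (L : Set (Finset α))) (A : Finset α) :
    InfClosed (({S ∈ L | ¬A ⊆ S} : Finset (Finset α)) : Set (Finset α)) := by
  simp only [InfClosed, coe_filter, Set.mem_ofPred_eq]
  exact fun S hS T hT ↦ ⟨hL hS.1 hT.1, fun hA ↦ hS.2 (hA.trans inf_le_left)⟩

lemma InfClosed.inter_eq_of_forall_card_le (hL : InfClosed (L : Set (Finset α))) {A M S : Finset α}
    (hA : A ∈ L) (hAmin : ∀ T ∈ L, T ≠ M → #A ≤ #T) (hS : S ∈ L) (hAS : ¬A ⊆ S) :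
    S ∩ A = M := by
  by_contra hne
  have hlt : #(S ∩ A) < #A :=
    card_lt_card ⟨inter_subset_right, fun h ↦ hAS (h.trans inter_subset_left)⟩
  exact hlt.not_ge (hAmin _ (hL hS hA) hne)

theorem InfClosed.card_le_two_pow_div {V : Finset α} (hLV : ∀ S ∈ L, S ⊆ V)
    (hL : InfClosed (L : Set (Finset α))) (hdiv : ∀ S ∈ L, ℓ ∣ #S) :
    #L ≤ 2 ^ (#V / ℓ) := by
  induction V using Finset.strongInduction generalizing L with
  | H V ih =>
  rcases le_or_gt #L 1 with hL1 | hL1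
  · exact hL1.trans Nat.one_le_two_pow
  have hLne : L.Nonempty := card_pos.1 (by omega)
  set M := L.inf' hLne id
  have hM : M ∈ L := hL.finsetInf'_mem hLne fun S hS ↦ hS
  obtain ⟨A, hA, hAmin⟩ := exists_min_image (L.erase M) card
    (card_pos.1 (by rw [card_erase_of_mem hM]; omega))
  obtain ⟨hAM, hAL⟩ := mem_erase.1 hA
  have hMA : M ⊂ A := (inf'_le id hAL).ssubset_of_ne hAM.symm
  obtain ⟨hℓ, hℓA⟩ := pos_and_le_card_sdiff_of_ssubset hMA (hdiv M hM) (hdiv A hAL)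
  have hAV := hLV A hAL
  have hAMV : A \ M ⊆ V := sdiff_subset.trans hAV
  have hAM_ne : (A \ M).Nonempty := card_pos.1 (by omega)
  have upper : #{S ∈ L | A ⊆ S} ≤ 2 ^ (#(V \ A) / ℓ) := by
    rw [← card_image_sdiff_filter_superset]
    refine ih _ (sdiff_ssubset hAV (hAM_ne.mono sdiff_subset)) ?_
      (hL.image_sdiff_filter_superset A) ?_ <;>
      simp only [mem_image, mem_filter] <;> rintro _ ⟨S, ⟨hS, hAS⟩, rfl⟩
    · exact sdiff_subset_sdiff (hLV S hS) le_rfl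
    · exact card_sdiff_of_subset hAS ▸ Nat.dvd_sub (hdiv S hS) (hdiv A hAL)
  have lower : #{S ∈ L | ¬A ⊆ S} ≤ 2 ^ (#(V \ (A \ M)) / ℓ) := by
    refine ih _ (sdiff_ssubset hAMV hAM_ne) ?_ (hL.filter_not_superset A)
      fun S hS ↦ hdiv S (mem_filter.1 hS).1
    intro S hS x hx
    obtain ⟨hSL, hAS⟩ := mem_filter.1 hS
    have hSA := hL.inter_eq_of_forall_card_le hAL
      (fun T hT hTM ↦ hAmin T (mem_erase.2 ⟨hTM, hT⟩)) hSL hAS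
    refine mem_sdiff.2 ⟨hLV S hSL hx, fun hxA ↦ (mem_sdiff.1 hxA).2 ?_⟩
    exact hSA ▸ mem_inter.2 ⟨hx, (mem_sdiff.1 hxA).1⟩
  have hA_pow := two_mul_two_pow_card_sdiff_div_le hAV hℓ (hℓA.trans (card_le_card sdiff_subset))
  have hAM_pow := two_mul_two_pow_card_sdiff_div_le hAMV hℓ hℓA
  calc #L = #{S ∈ L | A ⊆ S} + #{S ∈ L | ¬A ⊆ S} := (card_filter_add_card_filter_not _).symm
    _ ≤ 2 ^ (#(V \ A) / ℓ) + 2 ^ (#(V \ (A \ M)) / ℓ) := add_le_add upper lower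
    _ ≤ 2 ^ (#V / ℓ) := by omega

end

theorem fully_closed_bound_general {ℓ n : ℕ} (F : Finset (Finset (Fin n)))
    (h : ∀ m : ℕ, 1 ≤ m → ∀ f : Fin m → Finset (Fin n), (∀ j, f j ∈ F) →
      ℓ ∣ (Finset.univ.inf f).card) :
    F.card ≤ 2 ^ (n / ℓ) := by
  classical
  have hfin := F.finite_toSet.infClosure
  have hdiv : ∀ S ∈ hfin.toFinset, ℓ ∣ #S := by
    rintro _ hS
    obtain ⟨t, ht, htF, rfl⟩ := hfin.mem_toFinset.1 hS
    rw [inf'_id_eq_univ_inf_equivFin]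
    exact h _ ht.card_pos _ fun j ↦ htF (t.equivFin.symm j).2
  calc #F ≤ #hfin.toFinset := card_le_card fun S hS ↦ hfin.mem_toFinset.2 (subset_infClosure hS)
    _ ≤ 2 ^ (#(univ : Finset (Fin n)) / ℓ) :=
      InfClosed.card_le_two_pow_div (fun S _ ↦ subset_univ S) (by simp) hdiv
    _ = 2 ^ (n / ℓ) := by rw [card_univ, Fintype.card_fin]

/-- If the intersection of any finite number of members of `F` has size divisible by `ℓ`,
then `|F| ≤ 2 ^ ⌊n/ℓ⌋`. -/
theorem fully_closed_bound {ℓ n : ℕ} (hℓ : 1 ≤ ℓ) (F : Finset (Finset (Fin n)))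
    (h : ∀ m : ℕ, 1 ≤ m → ∀ f : Fin m → Finset (Fin n), (∀ j, f j ∈ F) →
      ℓ ∣ (Finset.univ.inf f).card) :
    F.card ≤ 2 ^ (n / ℓ) :=
  fully_closed_bound_general F h
end
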